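/- There exists a constant C > 0 such that for every integer ℓ ≥ 1 and every integer m with |m| ≤ ℓ, one has A_{ℓ,m}² ≤ C·√ℓ. -/

import Mathlib

open Real Finset

/-- γ(x) = Γ(x/2 + 1/2) / Γ(x/2 + 1). -/
noncomputable def gam (x : ℝ) : ℝ := Real.Gamma (x/2 + 1/2) / Real.Gamma (x/2 + 1)

/-- A_{ℓ,m} = sqrt(((2ℓ+1)/π)·γ(ℓ−m)·γ(ℓ+m)) if |m| ≤ ℓ and ℓ−m is even, else 0. -/
noncomputable def Acoef (ℓ : ℕ) (m : ℤ) : ℝ :=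
  if |m| ≤ (ℓ : ℤ) ∧ Even ((ℓ : ℤ) - m) then
    Real.sqrt ((2*(ℓ:ℝ)+1)/Real.pi * gam ((ℓ : ℝ) - (m : ℝ)) * gam ((ℓ : ℝ) + (m : ℝ)))
  else 0

lemma gam_pos {x : ℝ} (hx : 0 ≤ x) : 0 < gam x := by
  unfold gam
  apply div_pos <;> apply Real.Gamma_pos_of_pos <;> linarith

lemma gam_succ (n : ℕ) : gam (2*(n+1)) = gam (2*n) * ((2*n+1)/(2*n+2)) := by
  unfold gam
  have h1 : (2*((n:ℝ)+1))/2 + 1/2 = ((n:ℝ) + 1/2) + 1 := by ring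
  have h2 : (2*((n:ℝ)+1))/2 + 1 = ((n:ℝ) + 1) + 1 := by ring
  have h3 : (2*(n:ℝ))/2 + 1/2 = (n:ℝ) + 1/2 := by ring
  have h4 : (2*(n:ℝ))/2 + 1 = (n:ℝ) + 1 := by ring
  rw [h1, h2, h3, h4, Real.Gamma_add_one (by positivity), Real.Gamma_add_one (by positivity)]
  have g1 : 0 < Real.Gamma ((n:ℝ) + 1/2) := Real.Gamma_pos_of_pos (by positivity)
  have g2 : 0 < Real.Gamma ((n:ℝ) + 1) := Real.Gamma_pos_of_pos (by positivity)
  field_simp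

lemma gam_even_le (n : ℕ) : gam (2*n) ≤ Real.sqrt π / Real.sqrt (n+1) := by
  induction n with
  | zero =>
    simp only [Nat.cast_zero, mul_zero]
    unfold gam
    norm_num [Real.Gamma_one_half_eq, Real.Gamma_one]
  | succ n ih =>
    have hrec := gam_succ n
    have key : Real.sqrt ((n:ℝ)+2) * (2*n+1) ≤ Real.sqrt ((n:ℝ)+1) * (2*n+2) := by
      have e1 : Real.sqrt ((n:ℝ)+2) * (2*n+1) = Real.sqrt (((n:ℝ)+2) * (2*n+1)^2) := by
        rw [Real.sqrt_mul (by positivity), Real.sqrt_sq (by positivity)]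
      have e2 : Real.sqrt ((n:ℝ)+1) * (2*n+2) = Real.sqrt (((n:ℝ)+1) * (2*n+2)^2) := by
        rw [Real.sqrt_mul (by positivity), Real.sqrt_sq (by positivity)]
      rw [e1, e2]
      apply Real.sqrt_le_sqrt
      nlinarith [sq_nonneg ((n:ℝ))]
    have hpos1 : (0:ℝ) < Real.sqrt ((n:ℝ)+1) := by positivity
    have hpos2 : (0:ℝ) < Real.sqrt ((n:ℝ)+2) := by positivity
    have hsp : (0:ℝ) ≤ Real.sqrt π := Real.sqrt_nonneg _
    have step : Real.sqrt π / Real.sqrt ((n:ℝ)+1) * ((2*n+1)/(2*n+2)) ≤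
        Real.sqrt π / Real.sqrt ((n:ℝ)+2) := by
      rw [div_mul_div_comm, div_le_div_iff₀ (by positivity) hpos2]
      nlinarith [mul_le_mul_of_nonneg_left key hsp]
    have h2 : gam (2*n) * ((2*n+1)/(2*n+2)) ≤
        Real.sqrt π / Real.sqrt ((n:ℝ)+1) * ((2*n+1)/(2*n+2)) := by
      apply mul_le_mul_of_nonneg_right ih (by positivity)
    have : (2*((n:ℕ):ℝ)+2) = 2*(((n+1:ℕ)):ℝ) := by push_cast; ring
    calc gam (2*((n+1:ℕ):ℝ)) = gam (2*(n:ℝ)) * ((2*n+1)/(2*n+2)) := by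
          push_cast; push_cast at hrec; convert hrec using 3 <;> ring
      _ ≤ Real.sqrt π / Real.sqrt ((n:ℝ)+1) * ((2*n+1)/(2*n+2)) := h2
      _ ≤ Real.sqrt π / Real.sqrt ((n:ℝ)+2) := step
      _ = Real.sqrt π / Real.sqrt (((n+1:ℕ):ℝ)+1) := by push_cast; ring_nf

lemma key_prod {j k ℓ : ℕ} (hjk : j ≤ k) (h : j + k = ℓ) (hℓ : 1 ≤ ℓ) :
    (2*(ℓ:ℝ)+1)/π * gam (2*j) * gam (2*k) ≤ 5 * Real.sqrt ℓ := by
  have hπ : (0:ℝ) < π := Real.pi_pos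
  have hj : gam (2*(j:ℝ)) ≤ Real.sqrt π := by
    have := gam_even_le j
    have h1 : Real.sqrt π / Real.sqrt ((j:ℝ)+1) ≤ Real.sqrt π := by
      apply div_le_self (Real.sqrt_nonneg _)
      have : Real.sqrt 1 ≤ Real.sqrt ((j:ℝ)+1) := Real.sqrt_le_sqrt (by have := Nat.cast_nonneg (α := ℝ) j; linarith)
      simpa using this
    calc gam (2*(j:ℝ)) ≤ _ := this
      _ ≤ _ := h1
  have hk : gam (2*(k:ℝ)) ≤ Real.sqrt π / Real.sqrt ((k:ℝ)+1) := gam_even_le k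
  have hkl : (ℓ:ℝ) ≤ 2*((k:ℝ)+1) := by
    have : ℓ ≤ 2*(k+1) := by omega
    exact_mod_cast this
  have hsk : Real.sqrt (ℓ:ℝ) ≤ Real.sqrt 2 * Real.sqrt ((k:ℝ)+1) := by
    rw [← Real.sqrt_mul (by norm_num)]
    exact Real.sqrt_le_sqrt hkl
  have hskpos : (0:ℝ) < Real.sqrt ((k:ℝ)+1) := by positivity
  have hslpos : (0:ℝ) < Real.sqrt (ℓ:ℝ) := by
    apply Real.sqrt_pos.2; exact_mod_cast Nat.pos_of_ne_zero (by omega)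
  -- gam(2k) ≤ √π * √2 / √ℓ
  have hk2 : gam (2*(k:ℝ)) ≤ Real.sqrt π * Real.sqrt 2 / Real.sqrt (ℓ:ℝ) := by
    apply hk.trans
    rw [div_le_div_iff₀ hskpos hslpos]
    calc Real.sqrt π * Real.sqrt (ℓ:ℝ)
        ≤ Real.sqrt π * (Real.sqrt 2 * Real.sqrt ((k:ℝ)+1)) :=
          mul_le_mul_of_nonneg_left hsk (Real.sqrt_nonneg _)
      _ = Real.sqrt π * Real.sqrt 2 * Real.sqrt ((k:ℝ)+1) := by ring
  have gjpos : 0 < gam (2*(j:ℝ)) := gam_pos (by positivity)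
  have gkpos : 0 < gam (2*(k:ℝ)) := gam_pos (by positivity)
  have hc : (0:ℝ) ≤ (2*(ℓ:ℝ)+1)/π := by positivity
  have step1 : (2*(ℓ:ℝ)+1)/π * gam (2*j) * gam (2*k) ≤
      (2*(ℓ:ℝ)+1)/π * (Real.sqrt π * (Real.sqrt π * Real.sqrt 2 / Real.sqrt (ℓ:ℝ))) := by
    push_cast
    have := mul_le_mul hj hk2 (le_of_lt gkpos) (Real.sqrt_nonneg π)
    calc (2*(ℓ:ℝ)+1)/π * gam (2*(j:ℝ)) * gam (2*(k:ℝ))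
        = (2*(ℓ:ℝ)+1)/π * (gam (2*(j:ℝ)) * gam (2*(k:ℝ))) := by ring
      _ ≤ _ := mul_le_mul_of_nonneg_left this hc
  have hsq : Real.sqrt π * Real.sqrt π = π := Real.mul_self_sqrt hπ.le
  have step2 : (2*(ℓ:ℝ)+1)/π * (Real.sqrt π * (Real.sqrt π * Real.sqrt 2 / Real.sqrt (ℓ:ℝ)))
      = (2*(ℓ:ℝ)+1) * Real.sqrt 2 / Real.sqrt (ℓ:ℝ) := by
    field_simp
    linear_combination hsq
  have hl1 : (1:ℝ) ≤ (ℓ:ℝ) := by exact_mod_cast hℓ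
  have hdiv : (ℓ:ℝ) / Real.sqrt (ℓ:ℝ) = Real.sqrt (ℓ:ℝ) := Real.div_sqrt
  have hs2 : Real.sqrt 2 ≤ 1.5 := by
    rw [show (1.5:ℝ) = Real.sqrt (1.5^2) by rw [Real.sqrt_sq]; norm_num]
    apply Real.sqrt_le_sqrt; norm_num
  have step3 : (2*(ℓ:ℝ)+1) * Real.sqrt 2 / Real.sqrt (ℓ:ℝ) ≤ 5 * Real.sqrt (ℓ:ℝ) := by
    rw [div_le_iff₀ hslpos]
    have h5 : 5 * Real.sqrt (ℓ:ℝ) * Real.sqrt (ℓ:ℝ) = 5 * (ℓ:ℝ) := by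
      rw [mul_assoc, Real.mul_self_sqrt (by linarith)]
    rw [h5]
    nlinarith [Real.sqrt_nonneg (2:ℝ)]
  calc (2*(ℓ:ℝ)+1)/π * gam (2*j) * gam (2*k) ≤ _ := step1
    _ = _ := step2
    _ ≤ _ := step3

theorem Acoef_sq_le_sqrt :
    ∃ C > 0, ∀ ℓ : ℕ, 1 ≤ ℓ → ∀ m : ℤ, |m| ≤ (ℓ:ℤ) →
      (Acoef ℓ m)^2 ≤ C * Real.sqrt ℓ := by
  refine ⟨5, by norm_num, fun ℓ hℓ m hm => ?_⟩
  have hslnn : (0:ℝ) ≤ 5 * Real.sqrt ℓ := by positivity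
  unfold Acoef
  by_cases he : Even ((ℓ:ℤ) - m)
  · rw [if_pos ⟨hm, he⟩]
    have hm1 : -(ℓ:ℤ) ≤ m ∧ m ≤ (ℓ:ℤ) := abs_le.1 hm
    obtain ⟨t, ht⟩ := he
    have ht0 : 0 ≤ t := by omega
    obtain ⟨j, rfl⟩ := Int.eq_ofNat_of_zero_le ht0
    set k := ℓ - j with hk
    have hjℓ : j ≤ ℓ := by omega
    have hjk : (j:ℤ) + (k:ℤ) = ℓ := by simp [hk]; omega
    have hmk : m = (k:ℤ) - (j:ℤ) := by omega
    have e1 : (ℓ:ℝ) - (m:ℝ) = 2*(j:ℝ) := by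
      have : (ℓ:ℤ) - m = 2*(j:ℤ) := by omega
      have := congrArg (Int.cast : ℤ → ℝ) this
      push_cast at this ⊢; linarith
    have e2 : (ℓ:ℝ) + (m:ℝ) = 2*(k:ℝ) := by
      have : (ℓ:ℤ) + m = 2*(k:ℤ) := by omega
      have := congrArg (Int.cast : ℤ → ℝ) this
      push_cast at this ⊢; linarith
    rw [e1, e2]
    have hnn : 0 ≤ (2*(ℓ:ℝ)+1)/π * gam (2*(j:ℝ)) * gam (2*(k:ℝ)) := by
      have := gam_pos (x := 2*(j:ℝ)) (by positivity)
      have := gam_pos (x := 2*(k:ℝ)) (by positivity)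
      have := Real.pi_pos
      positivity
    rw [Real.sq_sqrt hnn]
    have hsum : j + k = ℓ := by omega
    rcases le_total j k with h | h
    · exact key_prod h hsum hℓ
    · have := key_prod h (by omega : k + j = ℓ) hℓ
      calc (2*(ℓ:ℝ)+1)/π * gam (2*(j:ℝ)) * gam (2*(k:ℝ))
          = (2*(ℓ:ℝ)+1)/π * gam (2*(k:ℝ)) * gam (2*(j:ℝ)) := by ring
        _ ≤ _ := by push_cast at this ⊢; exact this
  · rw [if_neg (by tauto)]
    simpa using hslnn
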